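/- arXiv:1204.2517 — 4 statements merged into one kernel-verified Lean document; each statement's English description precedes it below -/
import Mathlib

section
/- Let α ∈ (0,1) and κ_α = (1-α) α^{α/(1-α)} / 4^{1/(1-α)}. Define L(a,b) = κ_α (|b|^{2/α}/(-a))^{α/(1-α)} for a < 0, L(0,0) = 0, L = +∞ otherwise, and H(ρ,w) = |w|²/ρ^α for ρ > 0, H(0,0) = 0, H = +∞ otherwise. Then L is the convex (Legendre–Fenchel) conjugate of H, i.e. L(a,b) = sup over (ρ,w) ∈ ℝ × ℝ^d of (a·ρ + ⟨b,w⟩ − H(ρ,w)). -/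
open scoped RealInnerProductSpace
open Classical

/-- `H(ρ,w) = |w|²/ρ^α` if `ρ > 0`, `H(0,0) = 0`, `+∞` otherwise. -/
noncomputable def Hfun (d : ℕ) (α : ℝ) (p : ℝ × EuclideanSpace ℝ (Fin d)) : EReal :=
  if 0 < p.1 then ((‖p.2‖ ^ 2 / p.1 ^ α : ℝ) : EReal)
  else if p.1 = 0 ∧ p.2 = 0 then 0 else ⊤

/-- `L(a,b) = κ_α (|b|^{2/α}/(-a))^{α/(1-α)}` if `a < 0`, `L(0,0) = 0`, `+∞` otherwise. -/
noncomputable def Lfun (d : ℕ) (α : ℝ) (q : ℝ × EuclideanSpace ℝ (Fin d)) : EReal :=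
  if q.1 < 0 then
    ((((1 - α) * α ^ (α / (1 - α)) / 4 ^ ((1 : ℝ) / (1 - α))) *
      (‖q.2‖ ^ ((2 : ℝ) / α) / (-q.1)) ^ (α / (1 - α)) : ℝ) : EReal)
  else if q.1 = 0 ∧ q.2 = 0 then 0 else ⊤


/-!
Since `H(ρ, ·)` is a quadratic form divided by `ρ^α`, the supremum over `w` is taken at
`w = ρ^α b / 2` and equals `ρ^α |b|²/4`; the point `(0,0)` is the case `ρ = 0` of the same formula.
What remains is the one-dimensional problem `sup_{ρ ≥ 0} (aρ + cρ^α)` with `c = |b|²/4`. For `a < 0`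
the function is concave, so its stationary point `ρ = (αc/(-a))^{1/(1-α)}` is the maximiser,
which gives `(1-α) α^{α/(1-α)} c^{1/(1-α)} (-a)^{-α/(1-α)}`; for `a = 0 = c` it is `0`, and in
all remaining cases `aρ + cρ^α → ∞`.
-/

open Set Filter

section InnerProduct

variable {E : Type*} [NormedAddCommGroup E] [InnerProductSpace ℝ E]

lemma inner_sub_norm_sq_div_le (b w : E) {s : ℝ} (hs : 0 < s) :
    ⟪b, w⟫ - ‖w‖ ^ 2 / s ≤ s * ‖b‖ ^ 2 / 4 := by
  have hsq : 0 ≤ ‖w - (s / 2) • b‖ ^ 2 / s := by positivity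
  rw [norm_sub_sq_real, inner_smul_right, real_inner_comm, norm_smul,
    Real.norm_of_nonneg (by positivity)] at hsq
  field_simp at hsq ⊢
  nlinarith

lemma inner_smul_sub_norm_sq_div (b : E) (s : ℝ) :
    ⟪b, (s / 2) • b⟫ - ‖(s / 2) • b‖ ^ 2 / s = s * ‖b‖ ^ 2 / 4 := by
  rcases eq_or_ne s 0 with rfl | hs
  · simp
  rw [real_inner_smul_right, real_inner_self_eq_norm_sq, norm_smul, mul_pow, Real.norm_eq_abs,
    sq_abs]
  field_simp
  ring

end InnerProduct

lemma biSup_coe_eq_of_isGreatest {f : ℝ → ℝ} {s : Set ℝ} {M : ℝ} (h : IsGreatest (f '' s) M) :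
    ⨆ x ∈ s, (f x : EReal) = M := by
  obtain ⟨⟨x, hx, rfl⟩, hmax⟩ := h
  exact le_antisymm (iSup₂_le fun y hy => EReal.coe_le_coe (hmax ⟨y, hy, rfl⟩))
    (le_iSup₂_of_le x hx le_rfl)

lemma biSup_Ici_coe_eq_top_of_tendsto {f : ℝ → ℝ} (h : Tendsto f atTop atTop) (a : ℝ) :
    ⨆ x ∈ Ici a, (f x : EReal) = ⊤ := by
  refine (EReal.eq_top_iff_forall_lt _).2 fun y => ?_
  obtain ⟨x, hy, hx⟩ := ((h.eventually_gt_atTop y).and (eventually_ge_atTop a)).exists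
  exact (EReal.coe_lt_coe_iff.2 hy).trans_le (le_iSup₂_of_le x hx le_rfl)

/-- `hstat` says `r f'(r) = 0` for `f ρ = aρ + cρ^α`; Bernoulli's inequality is the tangent-line
bound of the concave `t ↦ t^α` at `t = 1`. -/
lemma mul_add_mul_rpow_le_of_stationary {α a c r ρ : ℝ} (hα0 : 0 ≤ α) (hα1 : α ≤ 1)
    (hc : 0 ≤ c) (hr : 0 < r) (hstat : a * r + α * c * r ^ α = 0) (hρ : 0 ≤ ρ) :
    a * ρ + c * ρ ^ α ≤ a * r + c * r ^ α := by
  set t := ρ / r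
  have ht : 0 ≤ t := by positivity
  have hρr : ρ = r * t := (mul_div_cancel₀ ρ hr.ne').symm
  have hbern : t ^ α ≤ 1 + α * (t - 1) := by
    simpa using rpow_one_add_le_one_add_mul_self (s := t - 1) (by linarith) hα0 hα1
  calc a * ρ + c * ρ ^ α = a * r * t + c * r ^ α * t ^ α := by
        rw [hρr, Real.mul_rpow hr.le ht]; ring
    _ ≤ a * r * t + c * r ^ α * (1 + α * (t - 1)) := by gcongr
    _ = a * r + c * r ^ α := by linear_combination (t - 1) * hstat

lemma isGreatest_mul_add_mul_rpow {α a c : ℝ} (hα0 : 0 < α) (hα1 : α < 1) (ha : a < 0)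
    (hc : 0 ≤ c) :
    IsGreatest ((fun ρ => a * ρ + c * ρ ^ α) '' Ici 0)
      ((1 - α) * α ^ (α / (1 - α)) * c ^ (1 / (1 - α)) * (-a) ^ (-(α / (1 - α)))) := by
  have h1α : 0 < 1 - α := by linarith
  rcases hc.eq_or_lt with rfl | hc
  · refine ⟨⟨0, self_mem_Ici, ?_⟩, ?_⟩
    · simp [Real.zero_rpow hα0.ne', Real.zero_rpow (inv_ne_zero h1α.ne')]
    · rintro _ ⟨ρ, hρ, rfl⟩
      simp only [Real.zero_rpow (one_div_pos.2 h1α).ne']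
      nlinarith [mem_Ici.1 hρ]
  -- the stationary point `r` solves `r ^ (1 - α) = x`
  set x := α * c / -a with hx_def
  have hx : 0 < x := div_pos (mul_pos hα0 hc) (neg_pos.2 ha)
  set r := x ^ (1 / (1 - α)) with hr_def
  have hr : 0 < r := by positivity
  have hrα : r ^ α = x ^ (α / (1 - α)) := by
    rw [hr_def, ← Real.rpow_mul hx.le, one_div_mul_eq_div]
  have hr_eq : r = r ^ α * x := by
    rw [hrα, ← Real.rpow_add_one hx.ne', hr_def]; congr 1; field_simp; ring
  have hax : a * x = -(α * c) := by rw [hx_def]; field_simp [ha.ne]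
  have hstat : a * r + α * c * r ^ α = 0 := by linear_combination a * hr_eq + r ^ α * hax
  have hxβ : x ^ (α / (1 - α)) =
      α ^ (α / (1 - α)) * c ^ (α / (1 - α)) * (-a) ^ (-(α / (1 - α))) := by
    rw [Real.div_rpow (by positivity) (by linarith), Real.mul_rpow hα0.le hc.le,
      Real.rpow_neg (by linarith), div_eq_mul_inv]
  have hcβ : c * c ^ (α / (1 - α)) = c ^ (1 / (1 - α)) := by
    rw [← Real.rpow_one_add' hc.le (by positivity)]; congr 1; field_simp; ring
  have hval : a * r + c * r ^ α =
      (1 - α) * α ^ (α / (1 - α)) * c ^ (1 / (1 - α)) * (-a) ^ (-(α / (1 - α))) := by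
    linear_combination hstat + (1 - α) * c * hrα + (1 - α) * c * hxβ +
      (1 - α) * α ^ (α / (1 - α)) * (-a) ^ (-(α / (1 - α))) * hcβ
  refine ⟨⟨r, hr.le, hval⟩, ?_⟩
  rintro _ ⟨ρ, hρ, rfl⟩
  exact hval ▸ mul_add_mul_rpow_le_of_stationary hα0.le hα1.le hc.le hr hstat hρ

lemma tendsto_mul_add_mul_rpow_atTop {α a c : ℝ} (hα0 : 0 < α) (hα1 : α ≤ 1) (ha : 0 ≤ a)
    (hac : 0 < a + c) :
    Tendsto (fun ρ => a * ρ + c * ρ ^ α) atTop atTop := by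
  refine tendsto_atTop_mono' atTop ?_ ((tendsto_rpow_atTop hα0).const_mul_atTop hac)
  filter_upwards [eventually_ge_atTop 1] with ρ hρ
  have : ρ ^ α ≤ ρ := by simpa using Real.rpow_le_rpow_of_exponent_le hρ hα1
  nlinarith

lemma iSup_sub_Hfun_eq {d : ℕ} {α : ℝ} (hα : 0 < α) (a : ℝ) (b : EuclideanSpace ℝ (Fin d)) :
    ⨆ p : ℝ × EuclideanSpace ℝ (Fin d), (((a * p.1 + ⟪b, p.2⟫ : ℝ) : EReal) - Hfun d α p) =
      ⨆ ρ ∈ Ici (0 : ℝ), ((a * ρ + ‖b‖ ^ 2 / 4 * ρ ^ α : ℝ) : EReal) := by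
  apply le_antisymm
  · refine iSup_le fun ⟨ρ, w⟩ => ?_
    unfold Hfun
    split_ifs with hρ h0
    · refine le_iSup₂_of_le ρ hρ.le ?_
      rw [← EReal.coe_sub, EReal.coe_le_coe_iff]
      linarith [inner_sub_norm_sq_div_le b w (Real.rpow_pos_of_pos hρ α)]
    · obtain ⟨rfl, rfl⟩ := h0
      exact le_iSup₂_of_le 0 self_mem_Ici (by simp [Real.zero_rpow hα.ne'])
    · simp
  · refine iSup₂_le fun ρ hρ => ?_
    rcases (mem_Ici.1 hρ).eq_or_lt with rfl | hρ
    · exact le_iSup_of_le (0, 0) (by simp [Hfun, Real.zero_rpow hα.ne'])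
    refine le_iSup_of_le (ρ, (ρ ^ α / 2) • b) ?_
    simp only [Hfun, if_pos hρ]
    rw [← EReal.coe_sub, EReal.coe_le_coe_iff]
    linarith [inner_smul_sub_norm_sq_div b (ρ ^ α)]

lemma Lfun_of_neg {d : ℕ} {α : ℝ} (hα0 : 0 < α) (hα1 : α < 1) {q : ℝ × EuclideanSpace ℝ (Fin d)}
    (hq : q.1 < 0) :
    Lfun d α q = ((1 - α) * α ^ (α / (1 - α)) * (‖q.2‖ ^ 2 / 4) ^ (1 / (1 - α)) *
      (-q.1) ^ (-(α / (1 - α))) : ℝ) := by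
  have h1α : 0 < 1 - α := by linarith
  have hb := norm_nonneg q.2
  have hpow : (‖q.2‖ ^ (2 / α) / -q.1) ^ (α / (1 - α)) =
      ‖q.2‖ ^ (2 / (1 - α)) * (-q.1) ^ (-(α / (1 - α))) := by
    rw [Real.div_rpow (by positivity) (by linarith), Real.rpow_neg (by linarith),
      ← Real.rpow_mul hb, div_eq_mul_inv]
    congr 2
    field_simp
  have hquarter : (‖q.2‖ ^ 2 / 4) ^ (1 / (1 - α)) =
      ‖q.2‖ ^ (2 / (1 - α)) / 4 ^ (1 / (1 - α)) := by
    rw [Real.div_rpow (by positivity) (by norm_num), ← Real.rpow_natCast, ← Real.rpow_mul hb]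
    congr 2
    push_cast
    ring
  rw [Lfun, if_pos hq, hpow, hquarter]
  congr 1
  ring

theorem Lfun_eq_conjugate_Hfun_general (d : ℕ) (α : ℝ) (hα0 : 0 < α) (hα1 : α < 1)
    (q : ℝ × EuclideanSpace ℝ (Fin d)) :
    Lfun d α q =
      ⨆ p : ℝ × EuclideanSpace ℝ (Fin d),
        (((q.1 * p.1 + ⟪q.2, p.2⟫ : ℝ) : EReal) - Hfun d α p) := by
  obtain ⟨a, b⟩ := q
  rw [iSup_sub_Hfun_eq hα0]
  by_cases ha : a < 0
  · rw [Lfun_of_neg hα0 hα1 ha,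
      biSup_coe_eq_of_isGreatest (isGreatest_mul_add_mul_rpow hα0 hα1 ha (by positivity))]
  by_cases h0 : a = 0 ∧ b = 0
  · obtain ⟨rfl, rfl⟩ := h0
    simpa [Lfun] using (biSup_const (a := (0 : EReal)) (nonempty_Ici (a := (0 : ℝ)))).symm
  have hpos : 0 < a + ‖b‖ ^ 2 / 4 := by
    rcases (not_lt.1 ha).eq_or_lt with rfl | ha'
    · have : b ≠ 0 := fun hb => h0 ⟨rfl, hb⟩
      positivity
    · positivity
  rw [show Lfun d α (a, b) = ⊤ by simp [Lfun, ha, h0], biSup_Ici_coe_eq_top_of_tendsto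
    (tendsto_mul_add_mul_rpow_atTop hα0 hα1.le (not_lt.1 ha) hpos)]

/-- `L` is the Legendre–Fenchel conjugate of `H`:
`L(a,b) = sup_{(ρ,w)} (aρ + ⟨b,w⟩ − H(ρ,w))`. -/
theorem Lfun_eq_conjugate_Hfun (d : ℕ) (hd : 1 ≤ d) (α : ℝ) (hα0 : 0 < α) (hα1 : α < 1)
    (q : ℝ × EuclideanSpace ℝ (Fin d)) :
    Lfun d α q =
      ⨆ p : ℝ × EuclideanSpace ℝ (Fin d),
        (((q.1 * p.1 + ⟪q.2, p.2⟫ : ℝ) : EReal) - Hfun d α p) :=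
  Lfun_eq_conjugate_Hfun_general d α hα0 hα1 q
end

section
/- Let α ∈ (0,1), κ_α = (1-α)α^{α/(1-α)}/4^{1/(1-α)}, d_α = (2-α)α^{α/(2-α)}/2^{2/(2-α)}. For all A ≥ 0 and σ ≥ 0: κ_α A^{α/(1-α)} − d_α A^{α/(2-α)} σ ≥ − σ^{2-α}. -/
/-!
With `p = (2-α)/(1-α)` and `q = 2-α` (so `1/p + 1/q = 1`), the claim is
`d_α A^{α/(2-α)} σ ≤ κ_α A^{α/(1-α)} + σ^q`. This is Young's inequality in the sharp form
`x y ≤ x^p / (p q^{p-1}) + y^q`, applied to `x = d_α A^{α/(2-α)}`, `y = σ`;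
the constant `κ_α` is exactly `d_α^p / (p q^{p-1})`.
-/

open Real

theorem mul_le_rpow_div_add_rpow {p q : ℝ} (hpq : p.HolderConjugate q) {x y : ℝ}
    (hx : 0 ≤ x) (hy : 0 ≤ y) :
    x * y ≤ x ^ p / (p * q ^ (p - 1)) + y ^ q := by
  have hq : 0 < q := hpq.symm.pos
  -- Young's inequality for `x q^{-1/q}` and `y q^{1/q}`
  have young := young_inequality_of_nonneg (mul_nonneg hx (rpow_nonneg hq.le (-q⁻¹)))
    (mul_nonneg hy (rpow_nonneg hq.le q⁻¹)) hpq
  have hxq : (x * q ^ (-q⁻¹)) ^ p = x ^ p / q ^ (p - 1) := by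
    rw [mul_rpow hx (rpow_nonneg hq.le _), ← rpow_mul hq.le, neg_mul, rpow_neg hq.le,
      inv_mul_eq_div, hpq.div_conj_eq_sub_one, div_eq_mul_inv]
  have hyq : (y * q ^ q⁻¹) ^ q = y ^ q * q := by
    rw [mul_rpow hy (rpow_nonneg hq.le _), ← rpow_mul hq.le, inv_mul_cancel₀ hq.ne', rpow_one]
  have hprod : x * q ^ (-q⁻¹) * (y * q ^ q⁻¹) = x * y := by
    rw [mul_mul_mul_comm, ← rpow_add hq, neg_add_cancel, rpow_zero, mul_one]
  rw [hprod, hxq, hyq, mul_div_cancel_right₀ _ hq.ne', div_div] at young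
  rwa [mul_comm p]

theorem holderConjugate_two_sub_div_one_sub {α : ℝ} (hα : α < 1) :
    ((2 - α) / (1 - α)).HolderConjugate (2 - α) := by
  have hγ : 2 - α ≠ 0 := by linarith
  rw [Real.holderConjugate_iff]
  constructor
  · rw [one_lt_div (by linarith)]; linarith
  · rw [inv_div, inv_eq_one_div, ← add_div, div_eq_one_iff_eq hγ]; ring

theorem dual_constant_eq {α : ℝ} (hα0 : 0 < α) (hα1 : α < 1) :
    ((2 - α) * α ^ (α / (2 - α)) / 2 ^ ((2 : ℝ) / (2 - α))) ^ ((2 - α) / (1 - α)) /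
        ((2 - α) / (1 - α) * (2 - α) ^ ((2 - α) / (1 - α) - 1)) =
      (1 - α) * α ^ (α / (1 - α)) / 4 ^ ((1 : ℝ) / (1 - α)) := by
  have hγ : 0 < 2 - α := by linarith
  have h4 : (4 : ℝ) ^ ((1 : ℝ) / (1 - α)) = 2 ^ ((2 : ℝ) / (2 - α) * ((2 - α) / (1 - α))) := by
    rw [show (4 : ℝ) = 2 ^ (2 : ℝ) by norm_num, ← rpow_mul zero_le_two]
    congr 1; field_simp
  rw [div_rpow (by positivity) (by positivity), mul_rpow hγ.le (by positivity),
    ← rpow_mul hα0.le, ← rpow_mul zero_le_two, ← h4, rpow_sub_one hγ.ne',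
    show α / (2 - α) * ((2 - α) / (1 - α)) = α / (1 - α) by field_simp]
  field_simp

/-- with `κ_α = (1-α)α^{α/(1-α)}/4^{1/(1-α)}` and
`d_α = (2-α)α^{α/(2-α)}/2^{2/(2-α)}`, for all `A ≥ 0` and `σ ≥ 0`:
`κ_α A^{α/(1-α)} − d_α A^{α/(2-α)} σ ≥ − σ^{2-α}`. -/
theorem young_type_inequality (α : ℝ) (hα0 : 0 < α) (hα1 : α < 1)
    (A σ : ℝ) (hA : 0 ≤ A) (hσ : 0 ≤ σ) :
    ((1 - α) * α ^ (α / (1 - α)) / 4 ^ ((1 : ℝ) / (1 - α))) * A ^ (α / (1 - α)) -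
      ((2 - α) * α ^ (α / (2 - α)) / 2 ^ ((2 : ℝ) / (2 - α))) * A ^ (α / (2 - α)) * σ ≥
      -σ ^ (2 - α) := by
  have hγ : 0 < 2 - α := by linarith
  set d := (2 - α) * α ^ (α / (2 - α)) / 2 ^ ((2 : ℝ) / (2 - α))
  have hd : 0 ≤ d := by positivity
  have young := mul_le_rpow_div_add_rpow (holderConjugate_two_sub_div_one_sub hα1)
    (mul_nonneg hd (rpow_nonneg hA (α / (2 - α)))) hσ
  have hpow : (d * A ^ (α / (2 - α))) ^ ((2 - α) / (1 - α)) =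
      d ^ ((2 - α) / (1 - α)) * A ^ (α / (1 - α)) := by
    rw [mul_rpow hd (rpow_nonneg hA _), ← rpow_mul hA,
      show α / (2 - α) * ((2 - α) / (1 - α)) = α / (1 - α) by field_simp]
  rw [hpow, mul_div_right_comm, dual_constant_eq hα0 hα1] at young
  linarith
end

section
/- Let α ∈ (0,1) and let φ : [0,1] × ℝ^d → ℝ be C¹ with ∂_t φ < 0 everywhere. Set A(t,x) = |∇φ(t,x)|^{2/α}/(−∂_t φ(t,x)) and d_α = (2-α)α^{α/(2-α)}/2^{2/(2-α)}. Then for every absolutely continuous curve γ : [0,1] → ℝ^d with derivative in L^{2/(2-α)}, the function t ↦ φ(t,γ(t)) − d_α ∫₀^t A(s,γ(s))^{α/(2-α)} |γ'(s)|^{2/(2-α)} ds is nonincreasing; in particular φ(1,γ(1)) ≤ φ(0,γ(0)) + d_α ∫₀¹ A(s,γ(s))^{α/(2-α)} |γ'(s)|^{2/(2-α)} ds. -/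
/-!
Along `γ`, the chain rule gives `d/dt φ(t,γ(t)) = ∂ₜφ + ⟪∇φ, γ'⟫ ≤ ∂ₜφ + |∇φ| |γ'|`. Young's
inequality with the conjugate exponents `2/α`, `2/(2-α)`, weighted by `m = -∂ₜφ > 0`, bounds
`|∇φ| |γ'|` by `m + d_α A^{α/(2-α)} |γ'|^{2/(2-α)}`, so the `∂ₜφ` terms cancel. A function whose
derivative is bounded above by an integrable function grows at most by its integral (no
integrability of the derivative itself is needed), which is the monotonicity claim.
-/

open MeasureTheory Set

noncomputable def youngConst (α : ℝ) : ℝ :=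
  (2 - α) * α ^ (α / (2 - α)) / 2 ^ ((2 : ℝ) / (2 - α))

/-- Young's inequality `s = λ⁻¹ (λ s) ≤ λ^{-p}/p + (λ s)^q/q` with `p = 2/α`, `q = 2/(2-α)`;
`λ = (α/2)^{α/2}` makes the first term `1`, and then the second is `youngConst α * s^q`. -/
lemma le_one_add_youngConst_mul_rpow {α s : ℝ} (hα0 : 0 < α) (hα2 : α < 2) (hs : 0 ≤ s) :
    s ≤ 1 + youngConst α * s ^ ((2 : ℝ) / (2 - α)) := by
  have h2α : (0 : ℝ) < 2 - α := by linarith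
  have hαhalf : (0 : ℝ) < α / 2 := by linarith
  set lam : ℝ := (α / 2) ^ (α / 2) with hlam_def
  have hlam : 0 < lam := Real.rpow_pos_of_pos hαhalf _
  have hpq : (2 / α : ℝ).HolderConjugate (2 / (2 - α)) := by
    rw [Real.holderConjugate_iff]
    constructor
    · rw [lt_div_iff₀ hα0]; linarith
    · rw [inv_div, inv_div]; ring
  have hyoung := Real.young_inequality_of_nonneg (a := lam⁻¹) (b := lam * s)
    (by positivity) (by positivity) hpq
  have hfirst : lam⁻¹ ^ ((2 : ℝ) / α) / (2 / α) = 1 := by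
    rw [Real.inv_rpow hlam.le, hlam_def, ← Real.rpow_mul hαhalf.le,
      show α / 2 * (2 / α) = 1 by field_simp, Real.rpow_one]
    field_simp
  have htwo : (2 : ℝ) ^ ((2 : ℝ) / (2 - α)) = 2 * 2 ^ (α / (2 - α)) := by
    rw [show (2 : ℝ) / (2 - α) = 1 + α / (2 - α) by field_simp; ring,
      Real.rpow_add two_pos, Real.rpow_one]
  have hsecond : (lam * s) ^ ((2 : ℝ) / (2 - α)) / (2 / (2 - α))
      = youngConst α * s ^ ((2 : ℝ) / (2 - α)) := by
    rw [Real.mul_rpow hlam.le hs, hlam_def, ← Real.rpow_mul hαhalf.le,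
      show α / 2 * (2 / (2 - α)) = α / (2 - α) by field_simp,
      Real.div_rpow hα0.le zero_le_two, youngConst, htwo]
    have : (0 : ℝ) < 2 ^ (α / (2 - α)) := by positivity
    field_simp
  rw [inv_mul_cancel_left₀ hlam.ne', hfirst, hsecond] at hyoung
  exact hyoung

lemma mul_le_add_youngConst_mul {α m p v : ℝ} (hα0 : 0 < α) (hα2 : α < 2)
    (hm : 0 < m) (hp : 0 ≤ p) (hv : 0 ≤ v) :
    p * v ≤ m + youngConst α *
      ((p ^ ((2 : ℝ) / α) / m) ^ (α / (2 - α)) * v ^ ((2 : ℝ) / (2 - α))) := by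
  have h2α : (0 : ℝ) < 2 - α := by linarith
  have hscale : (p ^ ((2 : ℝ) / α) / m) ^ (α / (2 - α)) * v ^ ((2 : ℝ) / (2 - α))
      = m * (p * v / m) ^ ((2 : ℝ) / (2 - α)) := by
    rw [Real.div_rpow (by positivity) hm.le, ← Real.rpow_mul hp,
      show 2 / α * (α / (2 - α)) = (2 : ℝ) / (2 - α) by field_simp,
      Real.div_rpow (by positivity) hm.le, Real.mul_rpow hp hv,
      show (2 : ℝ) / (2 - α) = α / (2 - α) + 1 by field_simp; ring, Real.rpow_add hm,
      Real.rpow_one]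
    have : (0 : ℝ) < m ^ (α / (2 - α)) := by positivity
    field_simp
  calc p * v = m * (p * v / m) := by field_simp
    _ ≤ m * (1 + youngConst α * (p * v / m) ^ ((2 : ℝ) / (2 - α))) :=
      mul_le_mul_of_nonneg_left (le_one_add_youngConst_mul_rpow hα0 hα2 (by positivity)) hm.le
    _ = _ := by rw [hscale]; ring

theorem hasDerivAt_comp_prodMk_add_inner_gradient {E : Type*} [NormedAddCommGroup E]
    [InnerProductSpace ℝ E] [CompleteSpace E] {φ : ℝ × E → ℝ} {γ : ℝ → E} {t c : ℝ} {v : E}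
    (hφ : DifferentiableAt ℝ φ (t, γ t)) (hc : HasDerivAt (fun s => φ (s, γ t)) c t)
    (hγ : HasDerivAt γ v t) :
    HasDerivAt (fun s => φ (s, γ s)) (c + inner ℝ (gradient (fun y => φ (t, y)) (γ t)) v) t := by
  have hφ' := hφ.hasFDerivAt
  have hx : HasFDerivAt (fun y => φ (t, y))
      ((fderiv ℝ φ (t, γ t)).comp (ContinuousLinearMap.inr ℝ ℝ E)) (γ t) :=
    hφ'.comp _ (hasFDerivAt_prodMk_right t (γ t))
  have ht : HasDerivAt (fun s => φ (s, γ t)) (fderiv ℝ φ (t, γ t) (1, 0)) t :=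
    hφ'.comp_hasDerivAt t ((hasDerivAt_id t).prodMk (hasDerivAt_const t (γ t)))
  refine (hφ'.comp_hasDerivAt t ((hasDerivAt_id t).prodMk hγ)).congr_deriv ?_
  rw [hc.unique ht, inner_gradient_left, hx.fderiv, ContinuousLinearMap.comp_apply,
    ContinuousLinearMap.inr_apply, ← map_add, Prod.mk_add_mk, add_zero, zero_add]

theorem antitoneOn_sub_integral_of_hasDerivAt_le {f f' g : ℝ → ℝ} {a b : ℝ}
    (hf : ∀ x ∈ Icc a b, HasDerivAt f (f' x) x) (hg : IntervalIntegrable g volume a b)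
    (hle : ∀ x ∈ Icc a b, f' x ≤ g x) :
    AntitoneOn (fun t => f t - ∫ s in a..t, g s) (Icc a b) := by
  intro x hx y hy hxy
  have hsub : Icc x y ⊆ Icc a b := Icc_subset_Icc hx.1 hy.2
  have hint : ∀ z ∈ Icc a b, ∀ w ∈ Icc a b, IntervalIntegrable g volume z w := fun z hz w hw =>
    hg.mono_set (uIcc_subset_uIcc (Icc_subset_uIcc hz) (Icc_subset_uIcc hw))
  have ha : a ∈ Icc a b := left_mem_Icc.2 (hx.1.trans hx.2)
  have hincr : f y - f x ≤ ∫ s in x..y, g s :=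
    intervalIntegral.sub_le_integral_of_hasDeriv_right_of_le hxy
      (fun z hz => (hf z (hsub hz)).continuousAt.continuousWithinAt)
      (fun z hz => (hf z (hsub (Ioo_subset_Icc_self hz))).hasDerivWithinAt)
      ((intervalIntegrable_iff_integrableOn_Icc_of_le hxy).1 (hint x hx y hy))
      (fun z hz => hle z (hsub (Ioo_subset_Icc_self hz)))
  have hsplit := intervalIntegral.integral_interval_sub_left (hint a ha y hy) (hint a ha x hx)
  simp only
  linarith

theorem hamilton_jacobi_along_curves_general (d : ℕ) (α : ℝ) (hα0 : 0 < α) (hα1 : α < 1)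
    (dα : ℝ) (hdα : dα = (2 - α) * α ^ (α / (2 - α)) / 2 ^ ((2 : ℝ) / (2 - α)))
    (φ : ℝ × EuclideanSpace ℝ (Fin d) → ℝ) (hφ : ContDiff ℝ 1 φ)
    (dtφ : ℝ × EuclideanSpace ℝ (Fin d) → ℝ)
    (hdt : ∀ (t : ℝ) (x : EuclideanSpace ℝ (Fin d)),
      HasDerivAt (fun s => φ (s, x)) (dtφ (t, x)) t)
    (hneg : ∀ p, dtφ p < 0)
    (A : ℝ × EuclideanSpace ℝ (Fin d) → ℝ)
    (hA : ∀ p, A p = ‖gradient (fun y => φ (p.1, y)) p.2‖ ^ ((2 : ℝ) / α) / (-dtφ p))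
    (γ γ' : ℝ → EuclideanSpace ℝ (Fin d))
    (hγ : ∀ t ∈ Set.Icc (0 : ℝ) 1, HasDerivAt γ (γ' t) t)
    (hint : IntervalIntegrable
      (fun s => A (s, γ s) ^ (α / (2 - α)) * ‖γ' s‖ ^ ((2 : ℝ) / (2 - α))) volume 0 1) :
    AntitoneOn
      (fun t => φ (t, γ t) -
        dα * ∫ s in (0 : ℝ)..t, A (s, γ s) ^ (α / (2 - α)) * ‖γ' s‖ ^ ((2 : ℝ) / (2 - α)))
      (Set.Icc 0 1) ∧
    φ (1, γ 1) ≤ φ (0, γ 0) +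
      dα * ∫ s in (0 : ℝ)..(1 : ℝ),
        A (s, γ s) ^ (α / (2 - α)) * ‖γ' s‖ ^ ((2 : ℝ) / (2 - α)) := by
  have hderiv : ∀ t ∈ Icc (0 : ℝ) 1, HasDerivAt (fun s => φ (s, γ s))
      (dtφ (t, γ t) + inner ℝ (gradient (fun y => φ (t, y)) (γ t)) (γ' t)) t := fun t ht =>
    hasDerivAt_comp_prodMk_add_inner_gradient (hφ.differentiable one_ne_zero _) (hdt t (γ t))
      (hγ t ht)
  have hbound : ∀ t ∈ Icc (0 : ℝ) 1,
      dtφ (t, γ t) + inner ℝ (gradient (fun y => φ (t, y)) (γ t)) (γ' t)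
        ≤ dα * (A (t, γ t) ^ (α / (2 - α)) * ‖γ' t‖ ^ ((2 : ℝ) / (2 - α))) := fun t _ =>
    calc _ ≤ dtφ (t, γ t) + ‖gradient (fun y => φ (t, y)) (γ t)‖ * ‖γ' t‖ := by
          gcongr; exact real_inner_le_norm _ _
      _ ≤ dtφ (t, γ t) + (-dtφ (t, γ t) + youngConst α *
          ((‖gradient (fun y => φ (t, y)) (γ t)‖ ^ ((2 : ℝ) / α) / -dtφ (t, γ t)) ^ (α / (2 - α))
            * ‖γ' t‖ ^ ((2 : ℝ) / (2 - α)))) := by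
          gcongr
          exact mul_le_add_youngConst_mul hα0 (by linarith) (neg_pos.2 (hneg _)) (norm_nonneg _)
            (norm_nonneg _)
      _ = _ := by rw [hdα, hA]; unfold youngConst; ring
  have hanti := antitoneOn_sub_integral_of_hasDerivAt_le hderiv (hint.const_mul dα) hbound
  simp only [intervalIntegral.integral_const_mul] at hanti
  refine ⟨hanti, ?_⟩
  have h01 := hanti (left_mem_Icc.2 zero_le_one) (right_mem_Icc.2 zero_le_one) zero_le_one
  simp only [intervalIntegral.integral_same, mul_zero, sub_zero] at h01
  linarith

/-- if `φ` is C¹ with `∂_t φ < 0`, `A = |∇φ|^{2/α}/(−∂_t φ)` and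
`d_α = (2-α)α^{α/(2-α)}/2^{2/(2-α)}`, then along any curve `γ` with derivative `γ'`
(in `L^{2/(2-α)}`), the map
`t ↦ φ(t,γ(t)) − d_α ∫₀^t A(s,γ(s))^{α/(2-α)} |γ'(s)|^{2/(2-α)} ds`
is nonincreasing on `[0,1]`; in particular
`φ(1,γ(1)) ≤ φ(0,γ(0)) + d_α ∫₀¹ A(s,γ(s))^{α/(2-α)} |γ'(s)|^{2/(2-α)} ds`. -/
theorem hamilton_jacobi_along_curves (d : ℕ) (hd : 1 ≤ d) (α : ℝ) (hα0 : 0 < α) (hα1 : α < 1)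
    (dα : ℝ) (hdα : dα = (2 - α) * α ^ (α / (2 - α)) / 2 ^ ((2 : ℝ) / (2 - α)))
    (φ : ℝ × EuclideanSpace ℝ (Fin d) → ℝ) (hφ : ContDiff ℝ 1 φ)
    (dtφ : ℝ × EuclideanSpace ℝ (Fin d) → ℝ)
    (hdt : ∀ (t : ℝ) (x : EuclideanSpace ℝ (Fin d)),
      HasDerivAt (fun s => φ (s, x)) (dtφ (t, x)) t)
    (hneg : ∀ p, dtφ p < 0)
    (A : ℝ × EuclideanSpace ℝ (Fin d) → ℝ)
    (hA : ∀ p, A p = ‖gradient (fun y => φ (p.1, y)) p.2‖ ^ ((2 : ℝ) / α) / (-dtφ p))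
    (γ γ' : ℝ → EuclideanSpace ℝ (Fin d))
    (hγ : ∀ t ∈ Set.Icc (0 : ℝ) 1, HasDerivAt γ (γ' t) t)
    (hint : IntervalIntegrable
      (fun s => A (s, γ s) ^ (α / (2 - α)) * ‖γ' s‖ ^ ((2 : ℝ) / (2 - α))) volume 0 1) :
    AntitoneOn
      (fun t => φ (t, γ t) -
        dα * ∫ s in (0 : ℝ)..t, A (s, γ s) ^ (α / (2 - α)) * ‖γ' s‖ ^ ((2 : ℝ) / (2 - α)))
      (Set.Icc 0 1) ∧
    φ (1, γ 1) ≤ φ (0, γ 0) +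
      dα * ∫ s in (0 : ℝ)..(1 : ℝ),
        A (s, γ s) ^ (α / (2 - α)) * ‖γ' s‖ ^ ((2 : ℝ) / (2 - α)) :=
  hamilton_jacobi_along_curves_general d α hα0 hα1 dα hdα φ hφ dtφ hdt hneg A hA γ γ' hγ hint
end

section
/- Let α ∈ (0,1) and let L(a,b) be defined on ℝ × ℝ^d by L(a,b) = κ_α (|b|^{2/α}/(−a))^{α/(1-α)} if a < 0, L(0,0) = 0, L = +∞ otherwise, with κ_α = (1-α)α^{α/(1-α)}/4^{1/(1-α)}. If (a,b) and (a',b') are two distinct points of ℝ_− × ℝ^d with L(a,b) < +∞ and L(a',b') < +∞, then L is strictly convex on the segment [(a,b),(a',b')] unless b = b' = 0. -/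
open Classical

/-!
With `s = 1/(1-α) > 1` and `x = -a`, one has `L(a,b) = κ_α x (‖b‖²/x)^s`: `L` is `κ_α` times the
perspective of `v ↦ v^s`, taken at the point `(‖b‖², x)`. The perspective of a convex function is
convex, and it is increasing in `v`, so composing with the strictly convex `b ↦ ‖b‖²` gives strict
convexity along every segment with `b ≠ b'`. If `b = b' ≠ 0`, then `a ≠ a'`, the ratios `‖b‖²/x`
at the two ends differ, and the strict convexity of `v ↦ v^s` itself is what makes the perspective
inequality strict.
-/

open Real Set

lemma mul_add_one_sub_mul_pos {M : Type*} [Zero M] {b b' : M} {x x' t : ℝ} (hx : 0 ≤ x)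
    (hx' : 0 ≤ x') (hxb : x = 0 → b = 0)
    (hxb' : x' = 0 → b' = 0) (hb : ¬(b = 0 ∧ b' = 0)) (ht0 : 0 < t) (ht1 : t < 1) :
    0 < t * x + (1 - t) * x' := by
  rcases not_and_or.1 hb with hb | hb'
  · have hx0 : 0 < x := hx.lt_of_ne (Ne.symm (mt hxb hb))
    exact add_pos_of_pos_of_nonneg (mul_pos ht0 hx0) (mul_nonneg (sub_nonneg.2 ht1.le) hx')
  · have hx0' : 0 < x' := hx'.lt_of_ne (Ne.symm (mt hxb' hb'))
    exact add_pos_of_nonneg_of_pos (mul_nonneg ht0.le hx) (mul_pos (sub_pos.2 ht1) hx0')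

section Perspective

variable {f : ℝ → ℝ} {S : Set ℝ} {u u' x x' t : ℝ}

/-- The perspective inequality is Jensen's inequality for `f` at the weights `t x / X` and
`(1 - t) x' / X`, where `X = t x + (1 - t) x'`. -/
lemma perspective_div_eq (hxu : x = 0 → u = 0) (hxu' : x' = 0 → u' = 0) :
    (t * u + (1 - t) * u') / (t * x + (1 - t) * x') =
      t * x / (t * x + (1 - t) * x') * (u / x) +
        (1 - t) * x' / (t * x + (1 - t) * x') * (u' / x') := by
  conv_lhs => rw [← mul_div_cancel_of_imp' hxu, ← mul_div_cancel_of_imp' hxu']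
  ring

lemma ConvexOn.perspective_le (hf : ConvexOn ℝ S f) (hu : u / x ∈ S) (hu' : u' / x' ∈ S)
    (hx : 0 ≤ x) (hx' : 0 ≤ x') (ht0 : 0 ≤ t) (ht1 : t ≤ 1) (hX : 0 < t * x + (1 - t) * x')
    (hxu : x = 0 → u = 0) (hxu' : x' = 0 → u' = 0) :
    (t * x + (1 - t) * x') * f ((t * u + (1 - t) * u') / (t * x + (1 - t) * x')) ≤
      t * (x * f (u / x)) + (1 - t) * (x' * f (u' / x')) := by
  have ht1' : 0 ≤ 1 - t := sub_nonneg.2 ht1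
  have hweights : t * x / (t * x + (1 - t) * x') + (1 - t) * x' / (t * x + (1 - t) * x') = 1 := by
    rw [← add_div, div_self hX.ne']
  have hjensen := hf.2 hu hu' (by positivity) (by positivity) hweights
  simp only [smul_eq_mul] at hjensen
  rw [← perspective_div_eq hxu hxu'] at hjensen
  calc _ ≤ (t * x + (1 - t) * x') * (t * x / (t * x + (1 - t) * x') * f (u / x) +
        (1 - t) * x' / (t * x + (1 - t) * x') * f (u' / x')) := by gcongr
    _ = _ := by field_simp

lemma StrictConvexOn.perspective_lt (hf : StrictConvexOn ℝ S f) (hu : u / x ∈ S)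
    (hu' : u' / x' ∈ S) (hne : u / x ≠ u' / x') (hx : 0 < x) (hx' : 0 < x') (ht0 : 0 < t)
    (ht1 : t < 1) :
    (t * x + (1 - t) * x') * f ((t * u + (1 - t) * u') / (t * x + (1 - t) * x')) <
      t * (x * f (u / x)) + (1 - t) * (x' * f (u' / x')) := by
  have ht1' : 0 < 1 - t := sub_pos.2 ht1
  have hX : 0 < t * x + (1 - t) * x' := by positivity
  have hweights : t * x / (t * x + (1 - t) * x') + (1 - t) * x' / (t * x + (1 - t) * x') = 1 := by
    rw [← add_div, div_self hX.ne']
  have hjensen := hf.2 hu hu' hne (by positivity) (by positivity) hweights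
  simp only [smul_eq_mul] at hjensen
  rw [← perspective_div_eq (absurd · hx.ne') (absurd · hx'.ne')] at hjensen
  calc _ < (t * x + (1 - t) * x') * (t * x / (t * x + (1 - t) * x') * f (u / x) +
        (1 - t) * x' / (t * x + (1 - t) * x') * f (u' / x')) := by gcongr
    _ = _ := by field_simp

end Perspective

section SqNormPerspective

variable {E : Type*} [NormedAddCommGroup E] [InnerProductSpace ℝ E] {s x x' t : ℝ} {b b' : E}

lemma strictConvexOn_norm_sq : StrictConvexOn ℝ univ fun b : E ↦ ‖b‖ ^ 2 :=
  (strongConvexOn_iff_convex.2 (by simpa using convexOn_const 0 convex_univ)).strictConvexOn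
    two_pos

/-- By `x / 0 = 0` this vanishes at `x = 0`, matching `L(0, 0) = 0`. -/
noncomputable def sqNormPerspective (s x : ℝ) (b : E) : ℝ := x * (‖b‖ ^ 2 / x) ^ s

lemma sqNormPerspective_segment_lt (hs : 1 < s) (hx : 0 ≤ x) (hx' : 0 ≤ x')
    (hxb : x = 0 → b = 0) (hxb' : x' = 0 → b' = 0) (hne : (x, b) ≠ (x', b'))
    (hb : ¬(b = 0 ∧ b' = 0)) (ht0 : 0 < t) (ht1 : t < 1) :
    sqNormPerspective s (t * x + (1 - t) * x') (t • b + (1 - t) • b') <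
      t * sqNormPerspective s x b + (1 - t) * sqNormPerspective s x' b' := by
  have hX := mul_add_one_sub_mul_pos hx hx' hxb hxb' hb ht0 ht1
  have hpow := strictConvexOn_rpow hs
  unfold sqNormPerspective
  by_cases hbb : b = b'
  · subst hbb
    have hb0 : b ≠ 0 := fun h ↦ hb ⟨h, h⟩
    have hx0 : 0 < x := hx.lt_of_ne (Ne.symm (mt hxb hb0))
    have hx0' : 0 < x' := hx'.lt_of_ne (Ne.symm (mt hxb' hb0))
    have hratio : ‖b‖ ^ 2 / x ≠ ‖b‖ ^ 2 / x' := fun h ↦ hne (by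
      rw [div_eq_div_iff hx0.ne' hx0'.ne', mul_right_inj' (by positivity)] at h
      rw [h])
    have hlt := hpow.perspective_lt (mem_Ici.2 (by positivity)) (mem_Ici.2 (by positivity)) hratio
      hx0 hx0' ht0 ht1
    rw [← add_mul, add_sub_cancel, one_mul] at hlt
    rwa [← add_smul, add_sub_cancel, one_smul]
  · have hnorm := strictConvexOn_norm_sq.2 (mem_univ b) (mem_univ b') hbb ht0 (sub_pos.2 ht1)
      (add_sub_cancel t 1)
    simp only [smul_eq_mul] at hnorm
    calc _ < (t * x + (1 - t) * x') * ((t * ‖b‖ ^ 2 + (1 - t) * ‖b'‖ ^ 2) /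
          (t * x + (1 - t) * x')) ^ s := by gcongr
      _ ≤ _ := hpow.convexOn.perspective_le (mem_Ici.2 (by positivity))
          (mem_Ici.2 (by positivity)) hx hx' ht0.le ht1.le hX (fun h ↦ by simp [hxb h])
          (fun h ↦ by simp [hxb' h])

end SqNormPerspective

section Lfun

variable {d : ℕ} {α : ℝ} {q : ℝ × EuclideanSpace ℝ (Fin d)}

noncomputable def kappa (α : ℝ) : ℝ := (1 - α) * α ^ (α / (1 - α)) / 4 ^ ((1 : ℝ) / (1 - α))

lemma kappa_pos (hα0 : 0 < α) (hα1 : α < 1) : 0 < kappa α := by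
  have : 0 < 1 - α := sub_pos.2 hα1
  unfold kappa
  positivity

lemma Lfun_ne_top_iff : Lfun d α q ≠ ⊤ ↔ q.1 < 0 ∨ q = 0 := by
  unfold Lfun
  split_ifs with h1 h2
  · exact iff_of_true (EReal.coe_ne_top _) (Or.inl h1)
  · simp [Prod.ext_iff, h2]
  · simp [Prod.ext_iff, h1, h2]

lemma rpow_div_rpow_eq_mul_div_rpow {n x : ℝ} (hn : 0 ≤ n) (hx : 0 < x) (hα0 : α ≠ 0)
    (hα1 : α ≠ 1) :
    (n ^ (2 / α) / x) ^ (α / (1 - α)) = x * (n ^ 2 / x) ^ (1 / (1 - α)) := by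
  have h1α : 1 - α ≠ 0 := sub_ne_zero.2 hα1.symm
  have hexp : 1 / (1 - α) = 1 + α / (1 - α) := by field_simp; ring
  have hexp' : 2 / α * (α / (1 - α)) = ((2 : ℕ) : ℝ) * (1 + α / (1 - α)) := by
    push_cast; field_simp; ring
  rw [div_rpow (by positivity) hx.le, div_rpow (by positivity) hx.le, ← rpow_mul hn, hexp', hexp,
    ← rpow_natCast, ← rpow_mul hn, rpow_add hx, rpow_one]
  field_simp

lemma Lfun_eq_sqNormPerspective (hα0 : α ≠ 0) (hα1 : α ≠ 1) (hq : Lfun d α q ≠ ⊤) :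
    Lfun d α q = (kappa α * sqNormPerspective (1 / (1 - α)) (-q.1) q.2 : ℝ) := by
  rcases Lfun_ne_top_iff.1 hq with hq | rfl
  · rw [Lfun, if_pos hq, sqNormPerspective,
      ← rpow_div_rpow_eq_mul_div_rpow (norm_nonneg _) (neg_pos.2 hq) hα0 hα1]
    rfl
  · simp [Lfun, sqNormPerspective]

end Lfun

theorem Lfun_strictConvexOn_segment_general (d : ℕ) (α : ℝ) (hα0 : 0 < α) (hα1 : α < 1)
    (p q : ℝ × EuclideanSpace ℝ (Fin d)) (hpq : p ≠ q)
    (hLp : Lfun d α p ≠ ⊤) (hLq : Lfun d α q ≠ ⊤)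
    (hb : ¬(p.2 = 0 ∧ q.2 = 0)) :
    ∀ t : ℝ, 0 < t → t < 1 →
      Lfun d α (t • p + (1 - t) • q) <
        (t : EReal) * Lfun d α p + ((1 - t : ℝ) : EReal) * Lfun d α q := by
  intro t ht0 ht1
  have hs : 1 < 1 / (1 - α) := (one_lt_div (sub_pos.2 hα1)).2 (by linarith)
  have hdom : ∀ r, Lfun d α r ≠ ⊤ → 0 ≤ -r.1 ∧ (-r.1 = 0 → r.2 = 0) := by
    intro r hr
    rcases Lfun_ne_top_iff.1 hr with hr | rfl
    · exact ⟨by linarith, fun h ↦ absurd h (by linarith)⟩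
    · simp
  obtain ⟨hx, hxb⟩ := hdom p hLp
  obtain ⟨hx', hxb'⟩ := hdom q hLq
  have hne : (-p.1, p.2) ≠ (-q.1, q.2) := fun h ↦
    hpq (Prod.ext (neg_inj.1 (Prod.mk.inj h).1) (Prod.mk.inj h).2)
  have hlt := sqNormPerspective_segment_lt hs hx hx' hxb hxb' hne hb ht0 ht1
  have hX := mul_add_one_sub_mul_pos hx hx' hxb hxb' hb ht0 ht1
  have hcomb : -(t • p + (1 - t) • q).1 = t * -p.1 + (1 - t) * -q.1 := by
    simp only [Prod.fst_add, Prod.smul_fst, smul_eq_mul]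
    ring
  have hr : Lfun d α (t • p + (1 - t) • q) ≠ ⊤ := Lfun_ne_top_iff.2 (Or.inl (by linarith))
  rw [Lfun_eq_sqNormPerspective hα0.ne' hα1.ne hr, Lfun_eq_sqNormPerspective hα0.ne' hα1.ne hLp,
    Lfun_eq_sqNormPerspective hα0.ne' hα1.ne hLq, ← EReal.coe_mul, ← EReal.coe_mul,
    ← EReal.coe_add, EReal.coe_lt_coe_iff, hcomb, Prod.snd_add, Prod.smul_snd, Prod.smul_snd]
  calc _ < kappa α * (t * sqNormPerspective (1 / (1 - α)) (-p.1) p.2 +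
        (1 - t) * sqNormPerspective (1 / (1 - α)) (-q.1) q.2) :=
        mul_lt_mul_of_pos_left hlt (kappa_pos hα0 hα1)
    _ = _ := by ring

/-- if `(a,b) ≠ (a',b')` are two points of `ℝ₋ × ℝ^d` where `L` is finite,
and not both `b = 0` and `b' = 0`, then `L` is strictly convex on the segment
`[(a,b),(a',b')]`. -/
theorem Lfun_strictConvexOn_segment (d : ℕ) (hd : 1 ≤ d) (α : ℝ) (hα0 : 0 < α) (hα1 : α < 1)
    (p q : ℝ × EuclideanSpace ℝ (Fin d)) (hpq : p ≠ q)
    (hp : p.1 ≤ 0) (hq : q.1 ≤ 0)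
    (hLp : Lfun d α p ≠ ⊤) (hLq : Lfun d α q ≠ ⊤)
    (hb : ¬(p.2 = 0 ∧ q.2 = 0)) :
    ∀ t : ℝ, 0 < t → t < 1 →
      Lfun d α (t • p + (1 - t) • q) <
        (t : EReal) * Lfun d α p + ((1 - t : ℝ) : EReal) * Lfun d α q :=
  Lfun_strictConvexOn_segment_general d α hα0 hα1 p q hpq hLp hLq hb
end
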